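/- For all x ∈ ℝ, the fourth derivative of 𝓔(x) = φ(x)/Φ̄(x) satisfies |𝓔⁗(x)| ≤ 196. -/

import Mathlib

/-!
With `E = 𝓔(x)` one has `𝓔' = E (E - x)`, so `𝓔⁗(x)` is a quintic polynomial in `E` and `x`.
Everywhere `x ≤ E` and `E (E - x) ≤ 1`, the latter because `Φ̄² + xφΦ̄ - φ²` decreases to `0`.
For `x ≤ 0` the factor `E ≤ 2φ(x)` absorbs the powers of `x`, and for `0 ≤ x ≤ 3` these two facts
bound every term. For `x ≥ 3` the terms cancel to leading order: the quintic differs from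
`δ = E⁵ - xE⁴ - E³ + E` by `O(1/E)`, and `δ`, increasing in `E`, is bounded at the two
continued-fraction bounds `(x³ + 3x)/(x² + 2) ≤ E ≤ (x⁴ + 6x² + 3)/(x³ + 5x)`.
-/

open MeasureTheory Real Set Filter

noncomputable section

/-- The standard gaussian density `φ(x) = exp(-x²/2)/√(2π)`. -/
def gphi (x : ℝ) : ℝ := Real.exp (-x ^ 2 / 2) / Real.sqrt (2 * Real.pi)

/-- The complementary gaussian distribution function `Φ̄(x) = ∫_x^∞ φ(u) du`. -/
def Phibar (x : ℝ) : ℝ := ∫ u in Set.Ioi x, gphi u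

/-- `𝓔(x) = φ(x) / Φ̄(x)`. -/
def gaussE (x : ℝ) : ℝ := gphi x / Phibar x

/-- `F_q(x) = 𝓔((κ - x)/√(1-q)) / √(1-q)` (with threshold `κ`). -/
def Fq (κ q x : ℝ) : ℝ := gaussE ((κ - x) / Real.sqrt (1 - q)) / Real.sqrt (1 - q)

/-- `P(ψ) = ∫ tanh(√ψ z)² φ(z) dz`. -/
def Pfun (ψ : ℝ) : ℝ := ∫ z : ℝ, Real.tanh (Real.sqrt ψ * z) ^ 2 * gphi z

/-- `R_κ(q, α) = α ∫ F_q(√q z)² φ(z) dz`. -/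
def Rfun (κ q α : ℝ) : ℝ := α * ∫ z : ℝ, Fq κ q (Real.sqrt q * z) ^ 2 * gphi z

/-- `𝒢_κ(α, q, ψ)`. -/
def Gfun (κ α q ψ : ℝ) : ℝ :=
  -(ψ * (1 - q)) / 2 + (∫ z : ℝ, Real.log (2 * Real.cosh (Real.sqrt ψ * z)) * gphi z)
    + α * ∫ z : ℝ, Real.log (Phibar ((κ - Real.sqrt q * z) / Real.sqrt (1 - q))) * gphi z

def alphaLB : ℝ := 0.833078599
def alphaUB : ℝ := 0.833078600
def qLB : ℝ := 0.56394907949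
def qLU : ℝ := 0.56394907950
def qUL : ℝ := 0.56394908029
def qUB : ℝ := 0.56394908030
def psiLB : ℝ := 2.5763513100
def psiLU : ℝ := 2.5763513103
def psiUL : ℝ := 2.5763513221
def psiUB : ℝ := 2.5763513224


open Topology ProbabilityTheory

lemma gphi_eq_gaussianPDFReal : gphi = gaussianPDFReal 0 1 := by
  ext x
  simp [gphi, gaussianPDFReal, div_eq_inv_mul, mul_comm]

lemma gphi_pos (x : ℝ) : 0 < gphi x := by
  unfold gphi; positivity

lemma integrable_gphi : Integrable gphi := by
  rw [gphi_eq_gaussianPDFReal]; exact integrable_gaussianPDFReal 0 1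

lemma integral_gphi : ∫ x, gphi x = 1 := by
  rw [gphi_eq_gaussianPDFReal]; exact integral_gaussianPDFReal_eq_one 0 one_ne_zero

lemma continuous_gphi : Continuous gphi := by
  unfold gphi; fun_prop

lemma hasDerivAt_gphi (x : ℝ) : HasDerivAt gphi (-x * gphi x) x := by
  have h : HasDerivAt (fun y : ℝ => -y ^ 2 / 2) (-x) x :=
    ((hasDerivAt_pow 2 x).neg.div_const 2).congr_deriv (by push_cast; ring)
  exact (h.exp.div_const (√(2 * π))).congr_deriv (by rw [gphi]; ring)

lemma gphi_neg (x : ℝ) : gphi (-x) = gphi x := by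
  simp [gphi]

lemma tendsto_gphi_atTop : Tendsto gphi atTop (𝓝 0) := by
  have h : Tendsto (fun x : ℝ => -x ^ 2 / 2) atTop atBot :=
    (tendsto_pow_atTop two_ne_zero).atTop_mul_const_of_neg (by norm_num : (-(1:ℝ)/2) < 0)
      |>.congr fun x => by ring
  have := (tendsto_exp_atBot.comp h).div_const (√(2 * π))
  rwa [zero_div] at this

lemma tendsto_id_mul_gphi_atTop : Tendsto (fun x => x * gphi x) atTop (𝓝 0) := by
  have h := (tendsto_rpow_abs_mul_exp_neg_mul_sq_cocompact (by norm_num : (0:ℝ) < 1 / 2) 1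
    |>.mono_left atTop_le_cocompact).div_const (√(2 * π))
  rw [zero_div] at h
  refine h.congr' ?_
  filter_upwards [eventually_ge_atTop 0] with x hx
  simp [gphi, abs_of_nonneg hx, div_eq_inv_mul]
  ring

/-- From `√(2π) ≥ 5/2` and `1 + y + y²/2 ≤ exp y` at `y = x²/2`. -/
lemma gphi_mul_le (x : ℝ) :
    gphi x ≤ 2 / 5 ∧ gphi x * (1 + x ^ 2) ≤ 4 / 5 ∧ gphi x * (1 + x ^ 4) ≤ 16 / 5 := by
  have hpi : (5 / 2 : ℝ) ≤ √(2 * π) :=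
    Real.le_sqrt_of_sq_le (by nlinarith [pi_gt_d2])
  have hexp := quadratic_le_exp_of_nonneg (by positivity : 0 ≤ x ^ 2 / 2)
  have hprod : exp (-x ^ 2 / 2) * exp (x ^ 2 / 2) = 1 := by
    rw [← exp_add]; ring_nf; exact exp_zero
  have hw := exp_pos (-x ^ 2 / 2)
  have hg : gphi x * √(2 * π) = exp (-x ^ 2 / 2) := by
    unfold gphi; field_simp
  have hg0 := gphi_pos x
  refine ⟨?_, ?_, ?_⟩ <;>
    nlinarith [sq_nonneg x, sq_nonneg (x ^ 2), mul_le_mul_of_nonneg_left hexp hw.le]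

lemma Phibar_pos (x : ℝ) : 0 < Phibar x := by
  rw [Phibar, setIntegral_pos_iff_support_of_nonneg_ae
    (ae_of_all _ fun y => (gphi_pos y).le) integrable_gphi.integrableOn,
    Function.support_eq_univ fun y => (gphi_pos y).ne', univ_inter]
  simp

lemma Phibar_eq_sub_intervalIntegral (x : ℝ) : Phibar x = Phibar 0 - ∫ u in (0:ℝ)..x, gphi u := by
  rw [Phibar, Phibar, eq_sub_iff_add_eq, add_comm,
    intervalIntegral.integral_interval_add_Ioi integrable_gphi.integrableOn
      integrable_gphi.integrableOn]

lemma hasDerivAt_Phibar (x : ℝ) : HasDerivAt Phibar (-gphi x) x := by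
  rw [show Phibar = fun y => Phibar 0 - ∫ u in (0:ℝ)..y, gphi u from
    funext Phibar_eq_sub_intervalIntegral]
  exact (intervalIntegral.integral_hasDerivAt_right integrable_gphi.intervalIntegrable
    (continuous_gphi.stronglyMeasurableAtFilter _ _) continuous_gphi.continuousAt).const_sub _

lemma antitone_Phibar : Antitone Phibar :=
  antitone_of_hasDerivAt_nonpos hasDerivAt_Phibar fun x => neg_nonpos.2 (gphi_pos x).le

lemma tendsto_Phibar_atTop : Tendsto Phibar atTop (𝓝 0) :=
  tendsto_integral_Ioi_zero tendsto_id

lemma Phibar_zero : Phibar 0 = 1 / 2 := by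
  have hsymm : ∫ u in Iic (0:ℝ), gphi u = Phibar 0 := by
    rw [Phibar, ← neg_zero, ← integral_comp_neg_Ioi]
    simp [gphi_neg]
  have htotal := intervalIntegral.integral_Iic_add_Ioi (b := 0) integrable_gphi.integrableOn
    integrable_gphi.integrableOn
  rw [integral_gphi, hsymm] at htotal
  rw [Phibar] at *
  linarith

lemma half_le_Phibar {x : ℝ} (hx : x ≤ 0) : 1 / 2 ≤ Phibar x :=
  Phibar_zero ▸ antitone_Phibar hx

lemma nonneg_of_hasDerivAt_nonpos_of_tendsto {h h' : ℝ → ℝ} {a : ℝ}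
    (hd : ∀ y ≥ a, HasDerivAt h (h' y) y) (hd_nonpos : ∀ y ≥ a, h' y ≤ 0)
    (hlim : Tendsto h atTop (𝓝 0)) : 0 ≤ h a := by
  have hanti : AntitoneOn h (Ici a) :=
    antitoneOn_of_hasDerivWithinAt_nonpos (convex_Ici a)
      (fun y hy => (hd y hy).continuousAt.continuousWithinAt)
      (fun y hy => (hd y (interior_subset hy)).hasDerivWithinAt)
      (fun y hy => hd_nonpos y (interior_subset hy))
  exact le_of_tendsto hlim <| (eventually_ge_atTop a).mono fun y hy => hanti self_mem_Ici hy hy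

lemma hasDerivAt_Phibar_sub_gphi_mul {p : ℝ → ℝ} {p' y : ℝ} (hp : HasDerivAt p p' y) :
    HasDerivAt (fun y => Phibar y - gphi y * p y) (gphi y * (y * p y - p' - 1)) y :=
  ((hasDerivAt_Phibar y).sub ((hasDerivAt_gphi y).mul hp)).congr_deriv (by ring)

lemma tendsto_Phibar_sub_gphi_mul {p : ℝ → ℝ} (hp : Tendsto p atTop (𝓝 0)) :
    Tendsto (fun y => Phibar y - gphi y * p y) atTop (𝓝 0) := by
  simpa using tendsto_Phibar_atTop.sub (tendsto_gphi_atTop.mul hp)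

/-- `Φ̄ - φ p` vanishes at infinity and has derivative `φ (y p - p' - 1)`. -/
lemma gphi_mul_le_Phibar {p p' : ℝ → ℝ} {a : ℝ} (hp : ∀ y ≥ a, HasDerivAt p (p' y) y)
    (hsign : ∀ y ≥ a, y * p y - p' y ≤ 1) (hlim : Tendsto p atTop (𝓝 0)) :
    gphi a * p a ≤ Phibar a :=
  sub_nonneg.1 <| nonneg_of_hasDerivAt_nonpos_of_tendsto (a := a)
    (fun y hy => hasDerivAt_Phibar_sub_gphi_mul (hp y hy))
    (fun y hy => mul_nonpos_of_nonneg_of_nonpos (gphi_pos y).le (by linarith [hsign y hy]))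
    (tendsto_Phibar_sub_gphi_mul hlim)

lemma Phibar_le_gphi_mul {p p' : ℝ → ℝ} {a : ℝ} (hp : ∀ y ≥ a, HasDerivAt p (p' y) y)
    (hsign : ∀ y ≥ a, 1 ≤ y * p y - p' y) (hlim : Tendsto p atTop (𝓝 0)) :
    Phibar a ≤ gphi a * p a := by
  have h := nonneg_of_hasDerivAt_nonpos_of_tendsto (a := a)
    (fun y hy => (hasDerivAt_Phibar_sub_gphi_mul (hp y hy)).neg)
    (fun y hy => neg_nonpos.2 <| mul_nonneg (gphi_pos y).le (by linarith [hsign y hy]))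
    (neg_zero (G := ℝ) ▸ (tendsto_Phibar_sub_gphi_mul hlim).neg)
  simp only [Pi.neg_apply, neg_nonneg, sub_nonpos] at h
  exact h

lemma tendsto_zero_of_nonneg_of_le_inv {p : ℝ → ℝ} (h0 : ∀ y ≥ 1, 0 ≤ p y)
    (h1 : ∀ y ≥ 1, p y ≤ y⁻¹) : Tendsto p atTop (𝓝 0) :=
  squeeze_zero' (eventually_ge_atTop 1 |>.mono h0) (eventually_ge_atTop 1 |>.mono h1)
    tendsto_inv_atTop_zero

/-- The fourth convergent of the continued fraction `Φ̄/φ = 1/(x + 1/(x + 2/(x + 3/(x + ⋯))))`. -/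
lemma gphi_mul_le_Phibar_of_convergent (x : ℝ) :
    gphi x * ((x ^ 3 + 5 * x) / (x ^ 4 + 6 * x ^ 2 + 3)) ≤ Phibar x := by
  refine gphi_mul_le_Phibar (p := fun y => (y ^ 3 + 5 * y) / (y ^ 4 + 6 * y ^ 2 + 3))
    (p' := fun y => (-y ^ 6 - 9 * y ^ 4 - 21 * y ^ 2 + 15) / (y ^ 4 + 6 * y ^ 2 + 3) ^ 2)
    (fun y _ => ?_) (fun y _ => ?_) ?_
  · have hden : y ^ 4 + 6 * y ^ 2 + 3 ≠ 0 := by positivity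
    have hnum : HasDerivAt (fun y => y ^ 3 + 5 * y) (3 * y ^ 2 + 5) y :=
      ((hasDerivAt_pow 3 y).add ((hasDerivAt_id y).const_mul 5)).congr_deriv (by simp)
    have hden' : HasDerivAt (fun y => y ^ 4 + 6 * y ^ 2 + 3) (4 * y ^ 3 + 12 * y) y :=
      (((hasDerivAt_pow 4 y).add ((hasDerivAt_pow 2 y).const_mul 6)).add_const 3).congr_deriv
        (by simp; ring)
    exact (hnum.div hden' hden).congr_deriv (by field_simp; ring)
  · have hden : 0 < y ^ 4 + 6 * y ^ 2 + 3 := by positivity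
    have : y * ((y ^ 3 + 5 * y) / (y ^ 4 + 6 * y ^ 2 + 3)) -
        (-y ^ 6 - 9 * y ^ 4 - 21 * y ^ 2 + 15) / (y ^ 4 + 6 * y ^ 2 + 3) ^ 2 =
        1 - 24 / (y ^ 4 + 6 * y ^ 2 + 3) ^ 2 := by
      field_simp; ring
    rw [this]
    linarith [show 0 ≤ 24 / (y ^ 4 + 6 * y ^ 2 + 3) ^ 2 by positivity]
  · refine tendsto_zero_of_nonneg_of_le_inv (fun y hy => by positivity) fun y hy => ?_
    rw [div_le_iff₀ (by positivity), inv_mul_eq_div, le_div_iff₀ (by linarith)]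
    nlinarith

/-- The third convergent of the same continued fraction. -/
lemma Phibar_le_gphi_mul_of_convergent {x : ℝ} (hx : 0 < x) :
    Phibar x ≤ gphi x * ((x ^ 2 + 2) / (x ^ 3 + 3 * x)) := by
  refine Phibar_le_gphi_mul (p := fun y => (y ^ 2 + 2) / (y ^ 3 + 3 * y))
    (p' := fun y => -(y ^ 4 + 3 * y ^ 2 + 6) / (y ^ 3 + 3 * y) ^ 2)
    (fun y hy => ?_) (fun y hy => ?_) ?_
  · have hden : y ^ 3 + 3 * y ≠ 0 := by have : 0 < y := hx.trans_le hy; positivity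
    have hnum : HasDerivAt (fun y => y ^ 2 + 2) (2 * y) y :=
      ((hasDerivAt_pow 2 y).add_const 2).congr_deriv (by simp)
    have hden' : HasDerivAt (fun y => y ^ 3 + 3 * y) (3 * y ^ 2 + 3) y :=
      ((hasDerivAt_pow 3 y).add ((hasDerivAt_id y).const_mul 3)).congr_deriv (by simp)
    exact (hnum.div hden' hden).congr_deriv (by field_simp; ring)
  · have hy0 : 0 < y := hx.trans_le hy
    have : y * ((y ^ 2 + 2) / (y ^ 3 + 3 * y)) - -(y ^ 4 + 3 * y ^ 2 + 6) / (y ^ 3 + 3 * y) ^ 2 =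
        1 + 6 / (y ^ 3 + 3 * y) ^ 2 := by
      field_simp; ring
    rw [this]
    linarith [show 0 ≤ 6 / (y ^ 3 + 3 * y) ^ 2 by positivity]
  · refine tendsto_zero_of_nonneg_of_le_inv (fun y hy => by positivity) fun y hy => ?_
    rw [div_le_iff₀ (by positivity), inv_mul_eq_div, le_div_iff₀ (by linarith)]
    nlinarith

lemma id_mul_gphi_le_one_add_sq_mul_Phibar (x : ℝ) : x * gphi x ≤ (1 + x ^ 2) * Phibar x := by
  rcases le_or_gt x 0 with hx | hx
  · nlinarith [gphi_pos x, Phibar_pos x]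
  · have h := gphi_mul_le_Phibar_of_convergent x
    have hden : 0 < x ^ 4 + 6 * x ^ 2 + 3 := by positivity
    rw [mul_div_assoc', div_le_iff₀ hden] at h
    nlinarith [gphi_pos x, Phibar_pos x, mul_pos hx (gphi_pos x)]

/-- `Φ̄² + xφΦ̄ - φ²` decreases to `0`, its derivative being `φ (xφ - (1 + x²) Φ̄) ≤ 0`. -/
lemma gphi_sq_le (x : ℝ) : gphi x ^ 2 ≤ Phibar x ^ 2 + x * gphi x * Phibar x := by
  have hd (y : ℝ) : HasDerivAt (fun y => Phibar y ^ 2 + y * gphi y * Phibar y - gphi y ^ 2)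
      (gphi y * (y * gphi y - (1 + y ^ 2) * Phibar y)) y :=
    ((((hasDerivAt_Phibar y).pow 2).add (((hasDerivAt_id y).mul (hasDerivAt_gphi y)).mul
      (hasDerivAt_Phibar y))).sub ((hasDerivAt_gphi y).pow 2)).congr_deriv (by simp; ring)
  have hlim : Tendsto (fun y => Phibar y ^ 2 + y * gphi y * Phibar y - gphi y ^ 2) atTop (𝓝 0) :=
    by simpa using ((tendsto_Phibar_atTop.pow 2).add (tendsto_id_mul_gphi_atTop.mul
      tendsto_Phibar_atTop)).sub (tendsto_gphi_atTop.pow 2)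
  have := nonneg_of_hasDerivAt_nonpos_of_tendsto (a := x) (fun y _ => hd y)
    (fun y _ => mul_nonpos_of_nonneg_of_nonpos (gphi_pos y).le
      (sub_nonpos.2 (id_mul_gphi_le_one_add_sq_mul_Phibar y))) hlim
  linarith

lemma gaussE_pos (x : ℝ) : 0 < gaussE x := div_pos (gphi_pos x) (Phibar_pos x)

lemma hasDerivAt_gaussE (x : ℝ) : HasDerivAt gaussE (gaussE x * (gaussE x - x)) x := by
  have hP := (Phibar_pos x).ne'
  exact ((hasDerivAt_gphi x).div (hasDerivAt_Phibar x) hP).congr_deriv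
    (by rw [gaussE]; field_simp; ring)

lemma gaussE_mul_sub_le_one (x : ℝ) : gaussE x * (gaussE x - x) ≤ 1 := by
  have hP := Phibar_pos x
  rw [gaussE, div_sub' hP.ne', div_mul_div_comm, div_le_one (by positivity)]
  nlinarith [gphi_sq_le x]

lemma gaussE_le_two_mul_gphi {x : ℝ} (hx : x ≤ 0) : gaussE x ≤ 2 * gphi x := by
  rw [gaussE, div_le_iff₀ (Phibar_pos x)]
  nlinarith [half_le_Phibar hx, gphi_pos x]

lemma gaussE_le_of_convergent {x : ℝ} (hx : 0 < x) :
    gaussE x ≤ (x ^ 4 + 6 * x ^ 2 + 3) / (x ^ 3 + 5 * x) := by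
  have h := gphi_mul_le_Phibar_of_convergent x
  rw [gaussE, div_le_div_iff₀ (Phibar_pos x) (by positivity)]
  rw [mul_div_assoc', div_le_iff₀ (by positivity)] at h
  linarith

lemma convergent_le_gaussE {x : ℝ} (hx : 0 < x) :
    (x ^ 3 + 3 * x) / (x ^ 2 + 2) ≤ gaussE x := by
  have h := Phibar_le_gphi_mul_of_convergent hx
  rw [gaussE, div_le_div_iff₀ (by positivity) (Phibar_pos x)]
  rw [mul_div_assoc', le_div_iff₀ (by positivity)] at h
  linarith

lemma le_gaussE (x : ℝ) : x ≤ gaussE x := by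
  rcases le_or_gt x 0 with hx | hx
  · exact hx.trans (gaussE_pos x).le
  · refine le_trans ?_ (convergent_le_gaussE hx)
    rw [le_div_iff₀ (by positivity)]
    nlinarith

def fourthDerivPoly (E x : ℝ) : ℝ :=
  24 * E ^ 5 - 60 * x * E ^ 4 + (50 * x ^ 2 - 20) * E ^ 3 + (25 * x - 15 * x ^ 3) * E ^ 2
    + (x ^ 4 - 6 * x ^ 2 + 3) * E

@[fun_prop]
lemma differentiable_gaussE : Differentiable ℝ gaussE :=
  fun x => (hasDerivAt_gaussE x).differentiableAt

lemma deriv_gaussE : deriv gaussE = fun x => gaussE x * (gaussE x - x) :=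
  funext fun x => (hasDerivAt_gaussE x).deriv

lemma iteratedDeriv_four_gaussE (x : ℝ) :
    iteratedDeriv 4 gaussE x = fourthDerivPoly (gaussE x) x := by
  have d2 : deriv (fun x => gaussE x * (gaussE x - x)) =
      fun x => 2 * gaussE x ^ 3 - 3 * x * gaussE x ^ 2 + (x ^ 2 - 1) * gaussE x := by
    ext y; simp (disch := fun_prop) [deriv_gaussE]; ring
  have d3 : deriv (fun x => 2 * gaussE x ^ 3 - 3 * x * gaussE x ^ 2 + (x ^ 2 - 1) * gaussE x) =
      fun x => 6 * gaussE x ^ 4 - 12 * x * gaussE x ^ 3 + (7 * x ^ 2 - 4) * gaussE x ^ 2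
        + (3 * x - x ^ 3) * gaussE x := by
    ext y; simp (disch := fun_prop) [deriv_gaussE]; ring
  have d4 : deriv (fun x => 6 * gaussE x ^ 4 - 12 * x * gaussE x ^ 3
      + (7 * x ^ 2 - 4) * gaussE x ^ 2 + (3 * x - x ^ 3) * gaussE x) =
      fun x => fourthDerivPoly (gaussE x) x := by
    ext y; simp (disch := fun_prop) [deriv_gaussE, fourthDerivPoly]; ring
  simp only [iteratedDeriv_succ, iteratedDeriv_zero, deriv_gaussE, d2, d3, d4]

lemma abs_fourthDerivPoly_le {E x : ℝ} (hE : 0 ≤ E) (hxE : x ≤ E) (hu : E * (E - x) ≤ 1) :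
    |fourthDerivPoly E x| ≤ E ^ 3 + E * (E - x) ^ 4 + 11 * E * (E - x) ^ 2 + 3 * E := by
  set t := E - x
  set u := E * t with hu_def
  have ht0 : 0 ≤ t := sub_nonneg.2 hxE
  have hu0 : 0 ≤ u := mul_nonneg hE ht0
  have hP : fourthDerivPoly E x = u * t ^ 3 + 11 * u ^ 2 * t + 11 * u ^ 2 * E + u * E ^ 3
      - 6 * u * t - 13 * u * E - E ^ 3 + 3 * E := by
    rw [fourthDerivPoly, hu_def, show x = E - t by ring]; ring
  have h4 : E * t ^ 4 = u * t ^ 3 := by ring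
  have h2 : E * t ^ 2 = u * t := by ring
  rw [hP, abs_le, h4, mul_assoc 11 E, h2]
  constructor
  · nlinarith [mul_nonneg hu0 (pow_nonneg ht0 3), mul_nonneg (sq_nonneg u) ht0,
      mul_nonneg hu0 (pow_nonneg hE 3), mul_nonneg hu0 ht0,
      mul_nonneg hE (by nlinarith [sq_nonneg (u - 13 / 22)] : 0 ≤ 11 * u ^ 2 - 13 * u + 4)]
  · nlinarith [mul_nonneg (mul_nonneg hu0 ht0) (sub_nonneg.2 hu),
      mul_nonneg (mul_nonneg hu0 hE) (by linarith : 0 ≤ 13 - 11 * u),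
      mul_nonneg (sub_nonneg.2 hu) (pow_nonneg hE 3), mul_nonneg hu0 ht0, pow_nonneg hE 3]

lemma abs_fourthDerivPoly_le_of_nonpos {E x : ℝ} (hx : x ≤ 0) (hE : 0 ≤ E)
    (hu : E * (E - x) ≤ 1) (h0 : E ≤ 4 / 5) (h2 : E * (1 + x ^ 2) ≤ 8 / 5)
    (h4 : E * (1 + x ^ 4) ≤ 32 / 5) : |fourthDerivPoly E x| ≤ 90 := by
  refine (abs_fourthDerivPoly_le hE (by linarith) hu).trans ?_
  have hsq : (E - x) ^ 2 ≤ 2 * (E ^ 2 + x ^ 2) := by nlinarith [sq_nonneg (E + x)]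
  have hfourth : (E - x) ^ 4 ≤ 8 * (E ^ 4 + x ^ 4) := by
    nlinarith [sq_nonneg (E ^ 2 - x ^ 2), pow_le_pow_left₀ (sq_nonneg _) hsq 2]
  have hE2 : E ^ 2 ≤ 16 / 25 := by nlinarith
  have hE4 : E ^ 4 ≤ 1 := by nlinarith
  nlinarith [mul_le_mul_of_nonneg_left hsq hE, mul_le_mul_of_nonneg_left hfourth hE,
    mul_le_mul_of_nonneg_left hE2 hE, mul_le_mul_of_nonneg_left hE4 hE]

lemma abs_fourthDerivPoly_le_of_mem_Icc {E x : ℝ} (hx0 : 0 ≤ x) (hx3 : x ≤ 3) (hxE : x ≤ E)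
    (hu : E * (E - x) ≤ 1) : |fourthDerivPoly E x| ≤ 60 := by
  have hE : 0 ≤ E := hx0.trans hxE
  refine (abs_fourthDerivPoly_le hE hxE hu).trans ?_
  have ht0 : 0 ≤ E - x := sub_nonneg.2 hxE
  have ht1 : E - x ≤ 1 := by nlinarith
  have hE3 : E ≤ 331 / 100 := by nlinarith
  have h4 : E * (E - x) ^ 4 ≤ 1 := by
    nlinarith [mul_le_mul_of_nonneg_right hu (pow_nonneg ht0 3), pow_le_one₀ ht0 ht1 (n := 3)]
  have h2 : E * (E - x) ^ 2 ≤ 1 := by nlinarith [mul_le_mul_of_nonneg_right hu ht0]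
  have h3 : E ^ 3 ≤ (331 / 100) ^ 3 := pow_le_pow_left₀ hE hE3 3
  nlinarith

def fourthDerivLeading (E x : ℝ) : ℝ := E ^ 5 - x * E ^ 4 - E ^ 3 + E

lemma neg_one_le_fourthDerivLeading_of_convergent {x : ℝ} (hx : 3 ≤ x) :
    -1 ≤ fourthDerivLeading ((x ^ 3 + 3 * x) / (x ^ 2 + 2)) x := by
  have hval : fourthDerivLeading ((x ^ 3 + 3 * x) / (x ^ 2 + 2)) x =
      x * (x ^ 2 + 3) * (16 - 4 * x ^ 2 - 9 * x ^ 4 - 2 * x ^ 6) / (x ^ 2 + 2) ^ 5 := by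
    rw [fourthDerivLeading]; field_simp; ring
  rw [hval, le_div_iff₀ (by positivity)]
  -- after the shift `x = 3 + y` every coefficient of the difference is nonnegative
  obtain ⟨y, hy, rfl⟩ : ∃ y, 0 ≤ y ∧ x = 3 + y := ⟨x - 3, by linarith, by ring⟩
  rw [← sub_nonneg]
  ring_nf
  positivity

lemma fourthDerivLeading_of_convergent_le_two {x : ℝ} (hx : 3 ≤ x) :
    fourthDerivLeading ((x ^ 4 + 6 * x ^ 2 + 3) / (x ^ 3 + 5 * x)) x ≤ 2 := by
  have hx0 : 0 < x := by linarith
  have hval : fourthDerivLeading ((x ^ 4 + 6 * x ^ 2 + 3) / (x ^ 3 + 5 * x)) x =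
      (x ^ 4 + 6 * x ^ 2 + 3) * (4 * x ^ 10 + 69 * x ^ 8 + 404 * x ^ 6 + 850 * x ^ 4
        + 288 * x ^ 2 + 81) / (x ^ 5 * (x ^ 2 + 5) ^ 5) := by
    rw [fourthDerivLeading]; field_simp; ring
  rw [hval, div_le_iff₀ (by positivity)]
  obtain ⟨y, hy, rfl⟩ : ∃ y, 0 ≤ y ∧ x = 3 + y := ⟨x - 3, by linarith, by ring⟩
  rw [← sub_nonneg]
  ring_nf
  positivity

lemma monotoneOn_fourthDerivLeading {x : ℝ} (hx : 2 ≤ x) :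
    MonotoneOn (fun E => fourthDerivLeading E x) (Ici x) := by
  refine monotoneOn_of_hasDerivWithinAt_nonneg (f' := fun E => 5 * E ^ 4 - 4 * x * E ^ 3
    - 3 * E ^ 2 + 1) (convex_Ici x) (by unfold fourthDerivLeading; fun_prop)
    (fun E _ => ?_) (fun E hE => ?_)
  · refine HasDerivAt.hasDerivWithinAt ?_
    unfold fourthDerivLeading
    exact ((((hasDerivAt_pow 5 E).sub ((hasDerivAt_pow 4 E).const_mul x)).sub
      (hasDerivAt_pow 3 E)).add (hasDerivAt_id E)).congr_deriv (by simp; ring)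
  · rw [interior_Ici, mem_Ioi] at hE
    have hE2 : 4 ≤ E ^ 2 := by nlinarith
    nlinarith [mul_nonneg (pow_nonneg (by linarith : (0:ℝ) ≤ E) 3) (by linarith : 0 ≤ E - x),
      mul_nonneg (sq_nonneg E) (by linarith : (0:ℝ) ≤ E ^ 2 - 3)]

lemma abs_fourthDerivLeading_le {E x : ℝ} (hx : 3 ≤ x)
    (hlo : (x ^ 3 + 3 * x) / (x ^ 2 + 2) ≤ E)
    (hhi : E ≤ (x ^ 4 + 6 * x ^ 2 + 3) / (x ^ 3 + 5 * x)) :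
    |fourthDerivLeading E x| ≤ 2 := by
  have hlo_mem : (x ^ 3 + 3 * x) / (x ^ 2 + 2) ∈ Ici x := by
    rw [mem_Ici, le_div_iff₀ (by positivity)]; nlinarith
  have hE_mem : E ∈ Ici x := le_trans hlo_mem hlo
  have hmono := monotoneOn_fourthDerivLeading (by linarith : (2:ℝ) ≤ x)
  rw [abs_le]
  constructor
  · linarith [neg_one_le_fourthDerivLeading_of_convergent hx, hmono hlo_mem hE_mem hlo]
  · linarith [fourthDerivLeading_of_convergent_le_two hx,
      hmono hE_mem (le_trans hE_mem hhi) hhi]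

/-- With `u = E (E - x)` and `η = E² (1 - u)`, one has `fourthDerivLeading E x = E (1 - η)` and
`fourthDerivPoly E x = E (1 - η) - 9η/E + 11η²/E³ + (11u³ - 6u²)/E + u⁴/E³`. -/
lemma abs_fourthDerivPoly_le_of_leading {E x : ℝ} (hE : 3 ≤ E) (hxE : x ≤ E)
    (hu : E * (E - x) ≤ 1) (hδ : |fourthDerivLeading E x| ≤ 2) :
    |fourthDerivPoly E x| ≤ 11 := by
  set u := E * (E - x) with hu_def
  set η := E ^ 2 * (1 - u) with hη_def
  have hu0 : 0 ≤ u := mul_nonneg (by linarith) (by linarith)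
  have hη0 : 0 ≤ η := mul_nonneg (sq_nonneg E) (by linarith)
  have hδη : fourthDerivLeading E x = E * (1 - η) := by
    rw [fourthDerivLeading, hη_def, hu_def]; ring
  have hη1 : η ≤ 5 / 3 := by
    rw [hδη, abs_le] at hδ; nlinarith
  have hrest : E ^ 3 * (fourthDerivPoly E x - fourthDerivLeading E x) =
      -9 * η * E ^ 2 + 11 * η ^ 2 + (11 * u ^ 3 - 6 * u ^ 2) * E ^ 2 + u ^ 4 := by
    rw [fourthDerivPoly, fourthDerivLeading, hη_def, hu_def]; ring
  have hE2 : 9 ≤ E ^ 2 := by nlinarith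
  have hbound : |E ^ 3 * (fourthDerivPoly E x - fourthDerivLeading E x)| ≤ 25 * E ^ 2 := by
    rw [hrest, abs_le]
    have hu3 : 11 * u ^ 3 - 6 * u ^ 2 ≤ 6 := by nlinarith [pow_le_one₀ hu0 hu (n := 3)]
    have hu3' : -6 ≤ 11 * u ^ 3 - 6 * u ^ 2 := by nlinarith [pow_le_one₀ hu0 hu (n := 2)]
    have hu4 : u ^ 4 ≤ 1 := pow_le_one₀ hu0 hu
    constructor <;> nlinarith [mul_le_mul_of_nonneg_right hu3 (sq_nonneg E),
      mul_le_mul_of_nonneg_right hu3' (sq_nonneg E), mul_nonneg hη0 (sq_nonneg E),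
      pow_nonneg hu0 4, mul_le_mul_of_nonneg_right hη1 (sq_nonneg E)]
  rw [abs_mul, abs_of_pos (by positivity), show E ^ 3 = E ^ 2 * E by ring, mul_assoc,
    mul_comm 25] at hbound
  have hdiff := le_of_mul_le_mul_left hbound (by positivity)
  nlinarith [abs_sub_abs_le_abs_sub (fourthDerivPoly E x) (fourthDerivLeading E x),
    abs_nonneg (fourthDerivPoly E x - fourthDerivLeading E x)]

/-- Lemma 9.2. The fourth derivative of `𝓔(x) = φ(x)/Φ̄(x)` satisfies
`|𝓔⁗(x)| ≤ 196` for all `x ∈ ℝ`. -/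
theorem gaussE_fourth_derivative_bound (x : ℝ) :
    |iteratedDeriv 4 gaussE x| ≤ 196 := by
  rw [iteratedDeriv_four_gaussE]
  have hu := gaussE_mul_sub_le_one x
  have hxE := le_gaussE x
  rcases le_or_gt x 0 with hx | hx
  · have hE := gaussE_le_two_mul_gphi hx
    obtain ⟨h0, h2, h4⟩ := gphi_mul_le x
    refine (abs_fourthDerivPoly_le_of_nonpos hx (gaussE_pos x).le hu (by linarith) ?_ ?_).trans
      (by norm_num)
    · nlinarith [mul_le_mul_of_nonneg_right hE (by positivity : (0:ℝ) ≤ 1 + x ^ 2)]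
    · nlinarith [mul_le_mul_of_nonneg_right hE (by positivity : (0:ℝ) ≤ 1 + x ^ 4)]
  rcases le_or_gt x 3 with hx3 | hx3
  · exact (abs_fourthDerivPoly_le_of_mem_Icc hx.le hx3 hxE hu).trans (by norm_num)
  · have hδ := abs_fourthDerivLeading_le hx3.le (convergent_le_gaussE hx)
      (gaussE_le_of_convergent hx)
    exact (abs_fourthDerivPoly_le_of_leading (by linarith) hxE hu hδ).trans (by norm_num)
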